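/- arXiv:1411.3227 — 3 statements merged into one kernel-verified Lean document; each statement's English description precedes it below -/
import Mathlib

section
/- Let L be a graded Lie algebra, 𝔞 an abelian subalgebra, P: L → 𝔞 a projection whose kernel is a Lie subalgebra, and X ∈ L_1 a Maurer-Cartan element ([X,X]=0) with P(X)=0. Let Z(X) ⊆ L be the graded Lie subalgebra of elements commuting with X. Then Z(X)[1] ⊕ 𝔞 is an L∞[1]-subalgebra of Voronov's L∞[1]-algebra L[1] ⊕ 𝔞 with structure maps λ_{k+1}(l[1] ⊗ a_1 ⊗ ⋯ ⊗ a_k) = P([⋯[[l,a_1],a_2]⋯,a_k]) together with the derived brackets on 𝔞 and the differential −[X,·] on L. -/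
/-- A ℤ-graded Lie algebra structure on a real module `L`, given by a family of
graded subspaces, a bilinear bracket which is graded antisymmetric and satisfies
the graded Jacobi identity (the signs are written for homogeneous elements). -/
structure GradedLieStructure (L : Type*) [AddCommGroup L] [Module ℝ L] where
  grading : ℤ → Submodule ℝ L
  bracket : L →ₗ[ℝ] L →ₗ[ℝ] L
  bracket_grade : ∀ i j : ℤ, ∀ a ∈ grading i, ∀ b ∈ grading j,
    bracket a b ∈ grading (i + j)
  antisymm : ∀ i j : ℤ, ∀ a ∈ grading i, ∀ b ∈ grading j,
    bracket a b = -((-1 : ℝ) ^ (i * j) • bracket b a)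
  jacobi : ∀ i j : ℤ, ∀ a ∈ grading i, ∀ b ∈ grading j, ∀ c : L,
    bracket a (bracket b c) =
      bracket (bracket a b) c + (-1 : ℝ) ^ (i * j) • bracket b (bracket a c)

/-- Voronov's setting: `L` a graded Lie algebra, `𝔞` an abelian
subalgebra, `P : L → 𝔞` a projection whose kernel is a Lie subalgebra, and
`X ∈ L₁` a Maurer–Cartan element (`[X,X] = 0`) with `P X = 0`.  Then
`Z(X)[1] ⊕ 𝔞` is an `L∞[1]`-subalgebra of Voronov's `L∞[1]`-algebra
`L[1] ⊕ 𝔞`: the centralizer `Z(X) = {σ : [X,σ] = 0}` is closed under the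
bracket of `L` (on homogeneous elements), the differential `−[X,·]` of the DGLA
part takes values in `Z(X)` (since `[X,[X,·]] = 0`), and the mixed structure
maps `λ_{k+1}(l[1] ⊗ a₁ ⊗ ⋯ ⊗ a_k) = P([⋯[[l,a₁],a₂]⋯,a_k])` take values in
`𝔞`; together with the derived brackets on `𝔞`, all structure maps of
`L[1] ⊕ 𝔞` therefore preserve `Z(X)[1] ⊕ 𝔞`. -/
theorem centralizer_Linfty_subalgebra
    {L : Type*} [AddCommGroup L] [Module ℝ L]
    (g : GradedLieStructure L)
    (𝔞 : Submodule ℝ L) (P : L →ₗ[ℝ] L)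
    (habelian : ∀ a ∈ 𝔞, ∀ b ∈ 𝔞, g.bracket a b = 0)
    (hProj : ∀ x : L, P x ∈ 𝔞) (hPid : ∀ a ∈ 𝔞, P a = a)
    (hPker : ∀ x y : L, P x = 0 → P y = 0 → P (g.bracket x y) = 0)
    (X : L) (hX : X ∈ g.grading 1)
    (hMC : g.bracket X X = 0) (hPX : P X = 0) :
    -- `Z(X)` is closed under the bracket:
    (∀ i j : ℤ, ∀ a ∈ g.grading i, ∀ b ∈ g.grading j,
      g.bracket X a = 0 → g.bracket X b = 0 → g.bracket X (g.bracket a b) = 0) ∧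
    -- the differential `−[X,·]` takes values in `Z(X)` (it squares to zero):
    (∀ a : L, g.bracket X (g.bracket X a) = 0) ∧
    -- the mixed structure maps take values in `𝔞`:
    (∀ l a : L, P (g.bracket l a) ∈ 𝔞) := by
  refine ⟨?_, ?_, fun l a => hProj _⟩
  · intro i j a ha b hb hXa hXb
    have h := g.jacobi 1 i X hX a ha b
    simp [hXa, hXb] at h
    exact h
  · intro a
    have h := g.jacobi 1 1 X hX X hX a
    rw [hMC] at h
    simp at h
    have h2 : (g.bracket X) ((g.bracket X) a) + (g.bracket X) ((g.bracket X) a) = 0 :=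
      eq_neg_iff_add_eq_zero.mp h
    have h3 : (2:ℝ) • (g.bracket X) ((g.bracket X) a) = 0 := by
      rw [two_smul]; exact h2
    simpa using h3
end

section
/- Let A → M be a vector bundle with linear connection ∇, X_t a family of vector fields on M with flow ψ_t, and α_t a family of sections of A, viewed as fibrewise-constant vertical vector fields. Then the integral curve of the vector field α_t + (X_t)^{hor} on A starting at q ∈ M (in the zero section) is s(t) = ∫₀ᵗ ∥^{γ(t)}_{γ(τ)}[α_τ|_{γ(τ)}] dτ ∈ A_{γ(t)}, where γ(t) = ψ_t(q) and ∥ denotes ∇-parallel transport along γ. -/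
open Filter Topology Set

lemma aux_unique {F : Type*} [NormedAddCommGroup F] [NormedSpace ℝ F] [CompleteSpace F]
    (B : ℝ → F →L[ℝ] F) (A : ℝ → F →L[ℝ] F) (y : ℝ → F) (t : ℝ) (s : Set ℝ)
    (hs : IsOpen s) (hconv : Convex ℝ s) (hts : t ∈ s)
    (hBc : Continuous B)
    (hBu : ∀ u ∈ s, IsUnit (B u))
    (hB : ∀ u v, HasDerivAt (fun r => B r v) (-(A u (B u v))) u)
    (hy : ∀ u, HasDerivAt y (-(A u (y u))) u)
    (hyt : y t = 0) :
    ∀ u ∈ s, y u = 0 := by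
  set z : ℝ → F := fun u => Ring.inverse (B u) (y u) with hz_def
  have hz : ∀ u₀ ∈ s, HasDerivAt z 0 u₀ := by
    intro u₀ hu₀
    have hunit := hBu u₀ hu₀
    set w : F := Ring.inverse (B u₀) (y u₀) with hw_def
    have hB0w : B u₀ w = y u₀ := by
      have := Ring.mul_inverse_cancel (B u₀) hunit
      calc B u₀ w = (B u₀ * Ring.inverse (B u₀)) (y u₀) := rfl
        _ = y u₀ := by rw [this]; rfl
    rw [hasDerivAt_iff_tendsto_slope]
    have key : ∀ u ∈ s, slope z u₀ u
        = Ring.inverse (B u) (slope y u₀ u - slope (fun r => B r w) u₀ u) := by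
      intro u hu
      have hu_unit := hBu u hu
      have c1 : Ring.inverse (B u) (B u w) = w := by
        have := Ring.inverse_mul_cancel (B u) hu_unit
        calc Ring.inverse (B u) (B u w) = (Ring.inverse (B u) * B u) w := rfl
          _ = w := by rw [this]; rfl
      have hdiff : z u - z u₀ =
          Ring.inverse (B u) ((y u - y u₀) - (B u w - B u₀ w)) := by
        simp only [map_sub, hz_def, c1, hB0w]
        abel
      simp only [slope_def_module, hdiff, map_sub, map_smul, smul_sub]
    have h1 : Tendsto (slope y u₀) (𝓝[≠] u₀) (𝓝 (-(A u₀ (y u₀)))) :=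
      hasDerivAt_iff_tendsto_slope.mp (hy u₀)
    have h2 : Tendsto (slope (fun r => B r w) u₀) (𝓝[≠] u₀) (𝓝 (-(A u₀ (y u₀)))) := by
      have := hasDerivAt_iff_tendsto_slope.mp (hB u₀ w)
      rwa [hB0w] at this
    have h3 : Tendsto (fun u => slope y u₀ u - slope (fun r => B r w) u₀ u)
        (𝓝[≠] u₀) (𝓝 0) := by
      have := h1.sub h2
      simpa using this
    have h4 : Tendsto (fun u => Ring.inverse (B u)) (𝓝[≠] u₀)
        (𝓝 (Ring.inverse (B u₀))) := by
      have : ContinuousAt (fun u => Ring.inverse (B u)) u₀ := by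
        have hc : ContinuousAt Ring.inverse ((hunit.unit : (F →L[ℝ] F)ˣ) : F →L[ℝ] F) :=
          NormedRing.inverse_continuousAt hunit.unit
        rw [hunit.unit_spec] at hc
        exact hc.comp hBc.continuousAt
      exact this.tendsto.mono_left nhdsWithin_le_nhds
    have h5 : Tendsto (fun u => Ring.inverse (B u)
        (slope y u₀ u - slope (fun r => B r w) u₀ u)) (𝓝[≠] u₀) (𝓝 0) := by
      have heval : Continuous fun p : (F →L[ℝ] F) × F => p.1 p.2 :=
        isBoundedBilinearMap_apply.continuous
      have := (heval.tendsto (Ring.inverse (B u₀), 0)).comp (h4.prodMk_nhds h3)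
      simpa only [Function.comp_def, map_zero] using this
    refine h5.congr' ?_
    filter_upwards [nhdsWithin_le_nhds (hs.mem_nhds hu₀)] with u hu
    exact (key u hu).symm
  intro u hu
  have hzconst : z u = z t := by
    have := hconv.norm_image_sub_le_of_norm_hasDerivWithin_le
      (f' := fun _ => (0 : F)) (C := 0)
      (fun x hx => (hz x hx).hasDerivWithinAt) (fun x _ => by simp) hts hu
    have h0 : ‖z u - z t‖ ≤ 0 := by simpa using this
    exact sub_eq_zero.mp (norm_le_zero_iff.mp h0)
  have hzt : z t = 0 := by simp [hz_def, hyt]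
  have hzu : z u = 0 := hzconst.trans hzt
  have := Ring.mul_inverse_cancel (B u) (hBu u hu)
  calc y u = (B u * Ring.inverse (B u)) (y u) := by rw [this]; rfl
    _ = B u (z u) := rfl
    _ = 0 := by rw [hzu, map_zero]


/-- (Lemma on integral curves via parallel transport), in a
trivializing chart: the vector bundle `A → M` is modelled as `M × F`, a linear
connection `∇` is given by its connection coefficients
`Γ : M → M →L[ℝ] F →L[ℝ] F`, so that the horizontal lift of a vector field `X`
on `M` is `(x, a) ↦ (X x, −Γ x (X x) a)` and parallel transport `T t τ` along a
curve `γ` solves `∂_t (T t τ v) = −Γ(γ t)(γ' t)(T t τ v)`, `T τ τ = id`.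
Given a family of sections `α_t` of `A` (viewed as fibrewise-constant vertical
vector fields) and a family `X_t` of vector fields on `M`, the integral curve
of `α_t + (X_t)^{hor}` starting at `q ∈ M ⊆ A` is
`t ↦ (γ t, S t)` with `γ` the `X_t`-flow line through `q` and
`S t = ∫₀ᵗ T t τ (α_τ (γ τ)) dτ`: i.e. `S 0 = 0` and
`S' t = α_t(γ t) − Γ(γ t)(X_t(γ t))(S t)`, the vertical component of
`α_t + (X_t)^{hor}` at `(γ t, S t)`. -/
theorem integral_curve_via_parallel_transport
    {M F : Type*} [NormedAddCommGroup M] [NormedSpace ℝ M]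
    [NormedAddCommGroup F] [NormedSpace ℝ F] [CompleteSpace F]
    (Γ : M → M →L[ℝ] F →L[ℝ] F)
    (hΓ : Continuous Γ)
    (X : ℝ → M → M) (α : ℝ → M → F)
    (hα : Continuous fun p : ℝ × M => α p.1 p.2)
    (q : M) (γ : ℝ → M) (hγ0 : γ 0 = q)
    (hγ : ∀ t : ℝ, HasDerivAt γ (X t (γ t)) t)
    (T : ℝ → ℝ → (F →L[ℝ] F))
    (hTcont : Continuous fun p : ℝ × ℝ => T p.1 p.2)
    (hTid : ∀ τ : ℝ, T τ τ = ContinuousLinearMap.id ℝ F)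
    (hT : ∀ (τ : ℝ) (v : F), ∀ t : ℝ,
      HasDerivAt (fun u => T u τ v) (-(Γ (γ t) (X t (γ t)) (T t τ v))) t) :
    (fun t : ℝ => ∫ τ in (0:ℝ)..t, T t τ (α τ (γ τ))) 0 = 0 ∧
    ∀ t : ℝ,
      HasDerivAt (fun u : ℝ => ∫ τ in (0:ℝ)..u, T u τ (α τ (γ τ)))
        (α t (γ t) - Γ (γ t) (X t (γ t)) (∫ τ in (0:ℝ)..t, T t τ (α τ (γ τ)))) t := by
  have hγc : Continuous γ := by
    rw [continuous_iff_continuousAt]; exact fun t => (hγ t).continuousAt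
  set g : ℝ → F := fun τ => α τ (γ τ) with hg_def
  have hg : Continuous g := hα.comp (continuous_id.prodMk hγc)
  have hint : ∀ (u a b : ℝ),
      IntervalIntegrable (fun τ => T u τ (g τ)) MeasureTheory.volume a b := by
    intro u a b
    exact ((hTcont.comp (continuous_const.prodMk continuous_id)).clm_apply hg).intervalIntegrable a b
  set A : ℝ → F →L[ℝ] F := fun u => Γ (γ u) (X u (γ u)) with hA_def
  refine ⟨intervalIntegral.integral_same, ?_⟩
  intro t
  set S : ℝ → F := fun u => ∫ τ in (0:ℝ)..u, T u τ (g τ) with hS_def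
  have hBc : Continuous fun u => T u t := hTcont.comp (continuous_id.prodMk continuous_const)
  have hopen : IsOpen {u : ℝ | IsUnit (T u t)} := Units.isOpen.preimage hBc
  have htmem : t ∈ {u : ℝ | IsUnit (T u t)} := by
    simp only [Set.mem_setOf_eq, hTid t, ← ContinuousLinearMap.one_def]
    exact isUnit_one
  obtain ⟨ε, hε, hball⟩ := Metric.isOpen_iff.mp hopen t htmem
  have hcoc : ∀ u ∈ Metric.ball t ε, ∀ τ (v : F), T u τ v = T u t (T t τ v) := by
    intro u hu τ v
    have key := aux_unique (fun r => T r t) A (fun r => T r τ v - T r t (T t τ v)) t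
      (Metric.ball t ε) Metric.isOpen_ball (convex_ball t ε) (Metric.mem_ball_self hε)
      hBc (fun r hr => hball hr) (fun r w => hT t w r)
      (fun r => by
        have h3 := (hT τ v r).sub (hT t (T t τ v) r)
        have hval : -(Γ (γ r) (X r (γ r)) (T r τ v)) - -(Γ (γ r) (X r (γ r)) (T r t (T t τ v)))
            = -(A r (T r τ v - T r t (T t τ v))) := by
          simp only [hA_def, map_sub]; abel
        rwa [hval] at h3)
      (by simp [hTid])
    exact sub_eq_zero.mp (key u hu)
  have hrep : ∀ u ∈ Metric.ball t ε,
      S u = T u t (S t) + ∫ τ in t..u, T u τ (g τ) := by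
    intro u hu
    have hsplit : S u = (∫ τ in (0:ℝ)..t, T u τ (g τ)) + ∫ τ in t..u, T u τ (g τ) :=
      (intervalIntegral.integral_add_adjacent_intervals (hint u 0 t) (hint u t u)).symm
    have hpull : (∫ τ in (0:ℝ)..t, T u τ (g τ)) = T u t (S t) := by
      rw [hS_def]
      rw [← ContinuousLinearMap.intervalIntegral_comp_comm (T u t) (hint t 0 t)]
      exact intervalIntegral.integral_congr fun τ _ => hcoc u hu τ (g τ)
    rw [hsplit, hpull]
  have hd1 : HasDerivAt (fun u => T u t (S t)) (-(A t (S t))) t := by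
    have := hT t (S t) t
    simpa [hTid t] using this
  have hd2 : HasDerivAt (fun u => ∫ τ in t..u, T u τ (g τ)) (g t) t := by
    rw [hasDerivAt_iff_isLittleO, Asymptotics.isLittleO_iff]
    intro c hc
    have hΦ : ContinuousAt (fun p : ℝ × ℝ => T p.1 p.2 (g p.2) - g t) (t, t) :=
      ((hTcont.clm_apply (hg.comp continuous_snd)).sub continuous_const).continuousAt
    have h0 : (fun p : ℝ × ℝ => T p.1 p.2 (g p.2) - g t) (t, t) = 0 := by
      simp [hTid]
    have htend : Filter.Tendsto (fun p : ℝ × ℝ => T p.1 p.2 (g p.2) - g t)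
        (𝓝 (t, t)) (𝓝 0) := by rw [← h0]; exact hΦ
    obtain ⟨δ, hδ, hδsub⟩ :=
      Metric.mem_nhds_iff.mp (htend (Metric.closedBall_mem_nhds (0 : F) hc))
    filter_upwards [Metric.ball_mem_nhds t hδ] with u hu
    have hbound : ∀ τ ∈ Set.uIoc t u, ‖T u τ (g τ) - g t‖ ≤ c := by
      intro τ hτ
      have hτt : |τ - t| ≤ |u - t| := by
        rcases Set.mem_uIoc.mp hτ with h | h
        · rw [abs_of_pos (by linarith), abs_of_nonneg (by linarith)]; linarith
        · rw [abs_of_nonpos (by linarith)]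
          calc -(τ - t) ≤ -(u - t) := by linarith
            _ ≤ |u - t| := neg_le_abs _
      have hut : dist u t < δ := hu
      rw [Real.dist_eq] at hut
      have hmem : ((u, τ) : ℝ × ℝ) ∈ Metric.ball ((t : ℝ), (t : ℝ)) δ := by
        simp only [Metric.mem_ball, Prod.dist_eq, Real.dist_eq]
        exact max_lt hut (lt_of_le_of_lt hτt hut)
      have := hδsub hmem
      simpa [Metric.mem_closedBall, dist_zero_right] using this
    have heq : (∫ τ in t..u, T u τ (g τ)) - (∫ τ in t..t, T t τ (g τ)) - (u - t) • g t
        = ∫ τ in t..u, (T u τ (g τ) - g t) := by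
      rw [intervalIntegral.integral_same, sub_zero,
        intervalIntegral.integral_sub (hint u t u) (intervalIntegrable_const),
        intervalIntegral.integral_const]
    rw [heq]
    calc ‖∫ τ in t..u, (T u τ (g τ) - g t)‖ ≤ c * |u - t| :=
          intervalIntegral.norm_integral_le_of_norm_le_const hbound
      _ = c * ‖u - t‖ := by rw [Real.norm_eq_abs]
  have hsum : HasDerivAt (fun u => T u t (S t) + ∫ τ in t..u, T u τ (g τ))
      (-(A t (S t)) + g t) t := hd1.add hd2
  have heqf : S =ᶠ[𝓝 t] fun u => T u t (S t) + ∫ τ in t..u, T u τ (g τ) := by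
    filter_upwards [Metric.ball_mem_nhds t hε] with u hu using hrep u hu
  have hfinal : HasDerivAt S (-(A t (S t)) + g t) t := hsum.congr_of_eventuallyEq heqf
  rw [neg_add_eq_sub] at hfinal
  exact hfinal
end

section
/- Suppose (s_t) is a family of coisotropic sections starting at the zero section that arises from a Hamiltonian isotopy φ_t generated by functions H_t (i.e., graph(s_t) = φ_t(C)). Then, under the isomorphism Γ(E) ≅ Ω¹_𝔉(C), the derivative (∂/∂t)|_{t=0} s_t equals d_𝔉(H_0|_C); in particular its class in the first foliated cohomology H¹_𝔉(C) is trivial. -/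
set_option synthInstance.maxHeartbeats 1000000
set_option maxHeartbeats 1000000

/-- (Proposition `trivialclass` with Remark `TMHam`), in a
trivializing chart: the local symplectic model is `E = B × F → B`, with Poisson
bivector given by its (skew) sharp map `Psharp`; the zero section is
coisotropic, i.e. `Π(ξ,η) = 0` whenever both covectors annihilate the tangent
space `B × 0` of the zero section.  The Hamiltonian vector field of `H_t` is
`X_{H_t} = Π^♯(dH_t)`, with flow `φ_t`.  If `graph(s_t) = φ_t(C)` with
`s_0 = 0`, then the initial velocity `u = ∂_t|₀ s_t` satisfies, for every fibre
covector `η`,  `η(u(x)) = Π(x,0)(d(π*(H_0|_C)), η∘pr_F)`; i.e. under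
`Γ(E) ≅ Ω¹_𝔉(C)` the velocity `u` equals `d_𝔉(H_0|_C)`, so its class in
`H¹_𝔉(C)` is trivial. -/
theorem initial_velocity_of_hamiltonian_isotopy_is_exact
    {B F : Type*} [NormedAddCommGroup B] [NormedSpace ℝ B] [FiniteDimensional ℝ B]
    [NormedAddCommGroup F] [NormedSpace ℝ F] [FiniteDimensional ℝ F]
    (Psharp : B × F → ((B × F) →L[ℝ] ℝ) →L[ℝ] (B × F))
    (hsmooth : ContDiff ℝ (⊤ : ℕ∞) Psharp)
    (hskew : ∀ (y : B × F) (ξ η : (B × F) →L[ℝ] ℝ),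
      ξ (Psharp y η) = -η (Psharp y ξ))
    -- coisotropicity of the zero section:
    (hcoiso : ∀ (x : B) (ξ η : (B × F) →L[ℝ] ℝ),
      (∀ v : B, ξ (v, 0) = 0) → (∀ v : B, η (v, 0) = 0) →
        η (Psharp (x, 0) ξ) = 0)
    (H : ℝ → B × F → ℝ)
    (hH : ContDiff ℝ (⊤ : ℕ∞) (fun p : ℝ × (B × F) => H p.1 p.2))
    (φ : ℝ → B × F → B × F) (hφ0 : φ 0 = id)
    -- `φ` is the flow of the Hamiltonian vector fields `X_{H_t} = Π^♯(dH_t)`: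
    (hφ : ∀ y : B × F, ∀ t ∈ Set.Icc (0:ℝ) 1,
      HasDerivAt (fun τ => φ τ y) (Psharp (φ t y) (fderiv ℝ (H t) (φ t y))) t)
    (s : ℝ → B → F)
    (hs : ContDiff ℝ (⊤ : ℕ∞) (fun p : ℝ × B => s p.1 p.2))
    (hs0 : s 0 = fun _ => 0)
    (hgraph : ∀ t ∈ Set.Icc (0:ℝ) 1,
      {p : B × F | ∃ x, p = (x, s t x)} = φ t '' {p : B × F | ∃ x, p = (x, (0:F))})
    (u : B → F) (hu : ∀ x : B, HasDerivAt (fun t => s t x) (u x) 0) :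
    ∀ (x : B) (η : F →L[ℝ] ℝ),
      η (u x) =
        (η.comp (ContinuousLinearMap.snd ℝ B F))
          (Psharp (x, 0)
            (fderiv ℝ (fun y : B × F => H 0 (y.1, 0)) (x, 0))) := by
  intro x η
  have hIcc0 : (0:ℝ) ∈ Set.Icc (0:ℝ) 1 := ⟨le_rfl, zero_le_one⟩
  set y0 : B × F := (x, (0:F)) with hy0
  set c : ℝ → B × F := fun t => φ t y0 with hc
  have hc0 : c 0 = y0 := by simp [hc, hφ0]
  set dH : (B × F) →L[ℝ] ℝ := fderiv ℝ (H 0) y0 with hdH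
  set X : B × F := Psharp y0 dH with hXdef
  -- derivative of the curve
  have hX : HasDerivAt c X 0 := by
    have h := hφ y0 0 hIcc0
    rw [hφ0] at h
    simpa [hXdef, hdH, hc, hφ0] using h
  have hX1 : HasDerivAt (fun t => (c t).1) X.1 0 :=
    (ContinuousLinearMap.fst ℝ B F).hasFDerivAt.comp_hasDerivAt 0 hX
  have hX2 : HasDerivAt (fun t => (c t).2) X.2 0 :=
    (ContinuousLinearMap.snd ℝ B F).hasFDerivAt.comp_hasDerivAt 0 hX
  -- the curve stays in the graph
  have hmem : ∀ t ∈ Set.Icc (0:ℝ) 1, (c t).2 = s t ((c t).1) := by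
    intro t ht
    have hct : c t ∈ {p : B × F | ∃ x', p = (x', s t x')} := by
      rw [hgraph t ht]
      exact ⟨y0, ⟨x, rfl⟩, rfl⟩
    obtain ⟨x', hx'⟩ := hct
    rw [hx']
  -- S = total map, differentiability
  set S : ℝ × B → F := fun p => s p.1 p.2 with hSdef
  have hSdiff : DifferentiableAt ℝ S (0, x) := (hs.differentiable (by simp)) (0, x)
  have hSd : HasFDerivAt S (fderiv ℝ S (0, x)) (0, x) := hSdiff.hasFDerivAt
  set DS : ℝ × B →L[ℝ] F := fderiv ℝ S (0, x) with hDS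
  -- partial derivative in t equals u x
  have hpart_t : DS (1, 0) = u x := by
    have hγ : HasDerivAt (fun t : ℝ => (t, x)) ((1 : ℝ), (0 : B)) 0 := by
      simpa using ((hasDerivAt_id (0:ℝ)).prodMk (hasDerivAt_const (0:ℝ) x))
    have h1 : HasDerivAt (fun t : ℝ => S (t, x)) (DS (1, 0)) 0 :=
      hSd.comp_hasDerivAt (f := fun t : ℝ => (t, x)) 0 hγ
    have h2 : HasDerivAt (fun t : ℝ => S (t, x)) (u x) 0 := hu x
    exact h1.unique h2
  -- partial derivative in x vanishes (since s 0 = 0)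
  have hpart_x : ∀ w : B, DS (0, w) = 0 := by
    intro w
    have hinl : HasFDerivAt (fun y : B => ((0:ℝ), y))
        ((ContinuousLinearMap.prod (0 : B →L[ℝ] ℝ) (ContinuousLinearMap.id ℝ B))) x := by
      exact ((ContinuousLinearMap.prod (0 : B →L[ℝ] ℝ) (ContinuousLinearMap.id ℝ B))).hasFDerivAt
    have h1 : HasFDerivAt (fun y : B => S (0, y))
        (DS.comp ((ContinuousLinearMap.prod (0 : B →L[ℝ] ℝ) (ContinuousLinearMap.id ℝ B)))) x :=
      hSd.comp x hinl
    have h2 : HasFDerivAt (fun y : B => S (0, y)) (0 : B →L[ℝ] F) x := by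
      have : (fun y : B => S (0, y)) = fun _ : B => (0 : F) := by
        funext y; simp [hSdef, hs0]
      rw [this]
      exact hasFDerivAt_const 0 x
    have := h1.unique h2
    calc DS (0, w) = (DS.comp ((ContinuousLinearMap.prod (0 : B →L[ℝ] ℝ)
          (ContinuousLinearMap.id ℝ B)))) w := by simp
      _ = (0 : B →L[ℝ] F) w := by rw [this]
      _ = 0 := rfl
  -- derivative of t ↦ s t ((c t).1) at 0
  have hg : HasDerivAt (fun t => S (t, (c t).1)) (u x) 0 := by
    have hγ : HasDerivAt (fun t : ℝ => (t, (c t).1)) ((1 : ℝ), X.1) 0 :=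
      (hasDerivAt_id (0:ℝ)).prodMk hX1
    have hc01 : (c 0).1 = x := by rw [hc0]
    have hSd' : HasFDerivAt S DS (0, (c 0).1) := by rw [hc01]; exact hSd
    have h1 : HasDerivAt (fun t => S (t, (c t).1)) (DS (1, X.1)) 0 :=
      hSd'.comp_hasDerivAt (f := fun t : ℝ => (t, (c t).1)) 0 hγ
    have : DS (1, X.1) = u x := by
      have hsplit : ((1 : ℝ), X.1) = ((1 : ℝ), (0 : B)) + ((0 : ℝ), X.1) := by simp
      rw [hsplit, map_add, hpart_t, hpart_x]
      simp
    rwa [this] at h1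
  -- uniqueness of derivative within Icc gives X.2 = u x
  have hud : UniqueDiffWithinAt ℝ (Set.Icc (0:ℝ) 1) 0 :=
    (uniqueDiffOn_Icc one_pos) 0 hIcc0
  have hXu : X.2 = u x := by
    have hA : HasDerivWithinAt (fun t => (c t).2) X.2 (Set.Icc (0:ℝ) 1) 0 :=
      hX2.hasDerivWithinAt
    have hB : HasDerivWithinAt (fun t => (c t).2) (u x) (Set.Icc (0:ℝ) 1) 0 :=
      (hg.hasDerivWithinAt).congr hmem (hmem 0 hIcc0)
    have e1 := hA.derivWithin hud
    have e2 := hB.derivWithin hud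
    rw [← e1, ← e2]
  -- identify the pulled-back differential
  set L : (B × F) →L[ℝ] (B × F) :=
    (ContinuousLinearMap.fst ℝ B F).prod (0 : (B × F) →L[ℝ] F) with hL
  have hH0 : ContDiff ℝ (⊤ : ℕ∞) (H 0) := by
    have : (H 0) = (fun p : ℝ × (B × F) => H p.1 p.2) ∘ (fun y : B × F => ((0:ℝ), y)) := rfl
    rw [this]
    exact hH.comp (contDiff_const.prodMk contDiff_id)
  have hHd : HasFDerivAt (H 0) dH y0 := ((hH0.differentiable (by simp)) y0).hasFDerivAt
  have hpull : fderiv ℝ (fun y : B × F => H 0 (y.1, 0)) (x, 0) = dH.comp L := by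
    have hLy : L (x, (0:F)) = y0 := by simp [hL, hy0]
    have hHd' : HasFDerivAt (H 0) dH (L (x, (0:F))) := by rw [hLy]; exact hHd
    have hcomp : HasFDerivAt ((H 0) ∘ L) (dH.comp L) (x, (0:F)) :=
      hHd'.comp (x, (0:F)) L.hasFDerivAt
    have : (fun y : B × F => H 0 (y.1, 0)) = (H 0) ∘ L := by
      funext y; simp [hL]
    rw [this]
    exact hcomp.fderiv
  -- coisotropy kills the fibre part of dH
  set ηs : (B × F) →L[ℝ] ℝ := η.comp (ContinuousLinearMap.snd ℝ B F) with hηs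
  have hξ0 : ∀ v : B, (dH - dH.comp L) ((v, 0) : B × F) = 0 := by
    intro v
    have : L ((v, (0:F)) : B × F) = (v, (0:F)) := by simp [hL]
    simp [ContinuousLinearMap.sub_apply, ContinuousLinearMap.comp_apply, this]
  have hη0 : ∀ v : B, ηs ((v, 0) : B × F) = 0 := by
    intro v; simp [hηs]
  have hkill : ηs (Psharp (x, (0:F)) (dH - dH.comp L)) = 0 :=
    hcoiso x (dH - dH.comp L) ηs hξ0 hη0
  -- assemble
  have final : η (u x) = ηs (Psharp (x, (0:F)) (dH.comp L)) := by
    rw [← hXu]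
    have : ηs X = η X.2 := rfl
    rw [← this, hXdef, hy0]
    have hsplit : dH = dH.comp L + (dH - dH.comp L) := by abel
    calc ηs (Psharp (x, (0:F)) dH)
        = ηs (Psharp (x, (0:F)) (dH.comp L + (dH - dH.comp L))) := by rw [← hsplit]
      _ = ηs (Psharp (x, (0:F)) (dH.comp L)) + ηs (Psharp (x, (0:F)) (dH - dH.comp L)) := by
          rw [map_add, map_add]
      _ = ηs (Psharp (x, (0:F)) (dH.comp L)) := by rw [hkill, add_zero]
  rw [final, hpull]
end
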